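/- arXiv:2506.15602 — 2 statements merged into one kernel-verified Lean document; each statement's English description precedes it below -/
import Mathlib

section
/- Let 1 ≤ ℓ < k ≤ K and let P[ℓ,k] be a path from level k to level ℓ. Let coefficients c_{j,ℓ} ∈ [0,1] be given for ℓ ≤ j ≤ k such that c_{ℓ,ℓ} = 1, c_{j,ℓ} = 0 for every j ∈ (ℓ,k] not belonging to P(ℓ,k], and for every j ∈ P(ℓ,k]: c_{j,ℓ} ≤ min_{x∈S_j} ( r(x,S_ℓ) + Σ_{i∈P(ℓ,j)} r(x,S_i) · c_{i,ℓ} ). Then c_{j,ℓ} ≤ h_min(X_j,S_ℓ) for every ℓ < j ≤ k. -/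
open Finset

/-- A finite state space partitioned into fitness levels `S_0, …, S_K`
(`lev x = k` means `x ∈ S_k`), together with an elitist row-stochastic
transition matrix `p`. -/
structure LevelChain (S : Type*) [Fintype S] where
  /-- the number of non-optimal levels -/
  K : ℕ
  /-- the level of each state -/
  lev : S → ℕ
  one_le_K : 1 ≤ K
  lev_le : ∀ x, lev x ≤ K
  level_nonempty : ∀ k ≤ K, ∃ x, lev x = k
  /-- transition probabilities -/
  p : S → S → ℝ
  p_nonneg : ∀ x y, 0 ≤ p x y
  p_row_sum : ∀ x, ∑ y, p x y = 1
  elitist : ∀ x y, lev x < lev y → p x y = 0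

variable {S : Type*} [Fintype S]

/-- The fitness level `S_k`. -/
def LevelChain.level (c : LevelChain S) (k : ℕ) : Finset S :=
  Finset.univ.filter fun x => c.lev x = k

/-- The union of levels `S_{[i,j]} = S_i ∪ ⋯ ∪ S_j`. -/
def LevelChain.levels (c : LevelChain S) (i j : ℕ) : Finset S :=
  Finset.univ.filter fun x => i ≤ c.lev x ∧ c.lev x ≤ j

/-- `p(x, A) = Σ_{y ∈ A} p(x, y)`. -/
def LevelChain.pSet (c : LevelChain S) (x : S) (A : Finset S) : ℝ :=
  ∑ y ∈ A, c.p x y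

/-- The standing reachability assumption: from every non-optimal state one can
move to a better level with positive probability. -/
def LevelChain.Reachable (c : LevelChain S) : Prop :=
  ∀ k, 1 ≤ k → k ≤ c.K → ∀ x, c.lev x = k → 0 < c.pSet x (c.levels 0 (k - 1))

/-- Conditional transition probability `r(x, S_j)`:
`r(x,S_j) = p(x,S_j)/(1 − p(x,S_k))` for `j ≠ k = lev x`, and `r(x,S_k) = 0`. -/
noncomputable def LevelChain.r (c : LevelChain S) (x : S) (j : ℕ) : ℝ :=
  if j = c.lev x then 0
  else c.pSet x (c.level j) / (1 - c.pSet x (c.level (c.lev x)))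

/-- `r_min(X_k, S_j) = min_{x ∈ S_k} r(x, S_j)`. -/
noncomputable def LevelChain.rmin (c : LevelChain S) (k j : ℕ) : ℝ :=
  sInf ((fun x => c.r x j) '' {x | c.lev x = k})

/-- `r_max(X_k, S_j) = max_{x ∈ S_k} r(x, S_j)`. -/
noncomputable def LevelChain.rmax (c : LevelChain S) (k j : ℕ) : ℝ :=
  sSup ((fun x => c.r x j) '' {x | c.lev x = k})

/-- `m` is the mean hitting time of the optimal level `S_0`. -/
def LevelChain.IsMeanHittingTime (c : LevelChain S) (m : S → ℝ) : Prop :=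
  (∀ x, 0 ≤ m x) ∧
  (∀ x, c.lev x = 0 → m x = 0) ∧
  (∀ x, c.lev x ≠ 0 → m x = 1 + ∑ y, c.p x y * m y)

/-- `mbar` is the mean level-leaving time on `S ∖ S_0`. -/
def LevelChain.IsLevelLeavingTime (c : LevelChain S) (mbar : S → ℝ) : Prop :=
  (∀ x, c.lev x ≠ 0 → 0 ≤ mbar x) ∧
  (∀ x, c.lev x ≠ 0 → mbar x = 1 + ∑ y ∈ c.level (c.lev x), c.p x y * mbar y)

/-- `h ℓ x` is the probability of hitting level `S_ℓ` starting from `x`. -/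
def LevelChain.IsHitProb (c : LevelChain S) (h : ℕ → S → ℝ) : Prop :=
  (∀ ℓ x, 0 ≤ h ℓ x ∧ h ℓ x ≤ 1) ∧
  (∀ ℓ x, c.lev x = ℓ → h ℓ x = 1) ∧
  (∀ ℓ x, c.lev x < ℓ → h ℓ x = 0) ∧
  (∀ ℓ x, ℓ < c.lev x →
    h ℓ x = ∑ y ∈ c.levels ℓ (c.lev x), c.p x y * h ℓ y)

/-!
Induct on the level `j`. Off the path `c_{j,ℓ} = 0`. On the path, take a state `z ∈ S_j`
minimising `h(·, S_ℓ)` over `S_j`. One step of the hitting recursion at `z`, with `h = 1` on `S_ℓ`,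
`h ≥ c_{i,ℓ}` on the intermediate levels (induction) and `h ≥ h(z, S_ℓ)` on `S_j` (minimality),
gives `(1 − p(z,S_j)) h(z,S_ℓ) ≥ p(z,S_ℓ) + Σ_{ℓ<i<j} p(z,S_i) c_{i,ℓ}`; dividing by
`1 − p(z,S_j)` turns the right-hand side into the path bound for `c_{j,ℓ}` at `z`.
-/

namespace LevelChain

variable (c : LevelChain S)

theorem sum_levels_eq_sum_level (f : S → ℝ) (a b : ℕ) :
    ∑ y ∈ c.levels a b, f y = ∑ i ∈ Icc a b, ∑ y ∈ c.level i, f y := by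
  rw [← sum_fiberwise_of_maps_to (g := c.lev) (t := Icc a b) (fun y hy => by
    simpa [levels] using hy)]
  refine sum_congr rfl fun i hi => ?_
  congr 1
  ext y
  simp only [levels, level, mem_filter, mem_univ, true_and, mem_Icc] at hi ⊢
  constructor
  · exact And.right
  · rintro rfl; exact ⟨hi, rfl⟩

theorem pSet_le_one (x : S) (A : Finset S) : c.pSet x A ≤ 1 :=
  c.p_row_sum x ▸ sum_le_sum_of_subset_of_nonneg (subset_univ A) fun y _ _ => c.p_nonneg x y

theorem pSet_mul_le_sum_mul {x : S} {A : Finset S} {a : ℝ} {f : S → ℝ}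
    (hf : ∀ y ∈ A, a ≤ f y) : c.pSet x A * a ≤ ∑ y ∈ A, c.p x y * f y := by
  rw [pSet, sum_mul]
  exact sum_le_sum fun y hy => mul_le_mul_of_nonneg_left (hf y hy) (c.p_nonneg x y)

theorem r_of_ne {x : S} {i : ℕ} (hi : i ≠ c.lev x) :
    c.r x i = c.pSet x (c.level i) / (1 - c.pSet x (c.level (c.lev x))) :=
  if_neg hi

variable {c}

theorem IsHitProb.pSet_add_sum_le {h : ℕ → S → ℝ} (hh : c.IsHitProb h) {ℓ : ℕ} {z : S}
    (hℓz : ℓ < c.lev z) (g : ℕ → ℝ)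
    (hg : ∀ y, ℓ < c.lev y → c.lev y < c.lev z → g (c.lev y) ≤ h ℓ y)
    (hmin : ∀ y, c.lev y = c.lev z → h ℓ z ≤ h ℓ y) :
    c.pSet z (c.level ℓ) + ∑ i ∈ Ioo ℓ (c.lev z), c.pSet z (c.level i) * g i
      ≤ (1 - c.pSet z (c.level (c.lev z))) * h ℓ z := by
  set j := c.lev z
  have hstep : h ℓ z = ∑ i ∈ Icc ℓ j, ∑ y ∈ c.level i, c.p z y * h ℓ y := by
    rw [hh.2.2.2 ℓ z hℓz, sum_levels_eq_sum_level]
  rw [Icc_eq_cons_Ioc hℓz.le, sum_cons, Ioc_eq_cons_Ioo hℓz, sum_cons] at hstep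
  have hbottom : c.pSet z (c.level ℓ) * 1 ≤ ∑ y ∈ c.level ℓ, c.p z y * h ℓ y :=
    c.pSet_mul_le_sum_mul fun y hy => (hh.2.1 ℓ y (mem_filter.mp hy).2).ge
  have hmiddle : ∑ i ∈ Ioo ℓ j, c.pSet z (c.level i) * g i
      ≤ ∑ i ∈ Ioo ℓ j, ∑ y ∈ c.level i, c.p z y * h ℓ y := by
    refine sum_le_sum fun i hi => c.pSet_mul_le_sum_mul fun y hy => ?_
    obtain rfl := (mem_filter.mp hy).2
    exact hg y (mem_Ioo.mp hi).1 (mem_Ioo.mp hi).2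
  have htop : c.pSet z (c.level j) * h ℓ z ≤ ∑ y ∈ c.level j, c.p z y * h ℓ y :=
    c.pSet_mul_le_sum_mul fun y hy => hmin y (mem_filter.mp hy).2
  linarith

-- If `1 - p(z, S_{lev z}) = 0`, every `r z i` is the junk value `x / 0 = 0` and the bound is trivial.
theorem IsHitProb.r_add_sum_r_mul_le {h : ℕ → S → ℝ} (hh : c.IsHitProb h) {ℓ : ℕ} {z : S}
    (hℓz : ℓ < c.lev z) (g : ℕ → ℝ)
    (hg : ∀ y, ℓ < c.lev y → c.lev y < c.lev z → g (c.lev y) ≤ h ℓ y)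
    (hmin : ∀ y, c.lev y = c.lev z → h ℓ z ≤ h ℓ y) :
    c.r z ℓ + ∑ i ∈ Ioo ℓ (c.lev z), c.r z i * g i ≤ h ℓ z := by
  have hr : c.r z ℓ + ∑ i ∈ Ioo ℓ (c.lev z), c.r z i * g i
      = (c.pSet z (c.level ℓ) + ∑ i ∈ Ioo ℓ (c.lev z), c.pSet z (c.level i) * g i)
          / (1 - c.pSet z (c.level (c.lev z))) := by
    rw [add_div, sum_div, c.r_of_ne hℓz.ne]
    congr 1
    refine sum_congr rfl fun i hi => ?_
    rw [c.r_of_ne (mem_Ioo.mp hi).2.ne, div_mul_eq_mul_div]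
  rw [hr]
  exact div_le_of_le_mul₀ (sub_nonneg.mpr (c.pSet_le_one z _)) (hh.1 ℓ z).1
    (mul_comm (h ℓ z) _ ▸ hh.pSet_add_sum_le hℓz g hg hmin)

end LevelChain

theorem path_lower_coefficients_le_hitProb_general
    (c : LevelChain S)
    (h : ℕ → S → ℝ) (hh : c.IsHitProb h)
    (ℓ k : ℕ)
    (P : Finset ℕ)
    (cf : ℕ → ℝ)
    (hoff : ∀ j, ℓ < j → j ≤ k → j ∉ P → cf j = 0)
    (hrec : ∀ j ∈ P, j ≠ ℓ → ∀ x, c.lev x = j →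
      cf j ≤ c.r x ℓ + ∑ i ∈ P ∩ Finset.Ioo ℓ j, c.r x i * cf i) :
    ∀ j, ℓ < j → j ≤ k → ∀ x, c.lev x = j → cf j ≤ h ℓ x := by
  intro j
  induction j using Nat.strong_induction_on with
  | _ j IH =>
  intro hℓj hjk x hx
  by_cases hjP : j ∈ P
  case neg => exact hoff j hℓj hjk hjP ▸ (hh.1 ℓ x).1
  obtain ⟨z, hz, hzmin⟩ := exists_min_image (c.level j) (h ℓ) ⟨x, by simp [LevelChain.level, hx]⟩
  replace hz : c.lev z = j := (mem_filter.mp hz).2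
  have hoffsum : ∑ i ∈ P ∩ Ioo ℓ j, c.r z i * cf i = ∑ i ∈ Ioo ℓ j, c.r z i * cf i :=
    sum_subset inter_subset_right fun i hi hiP => by
      rw [hoff i (mem_Ioo.mp hi).1 ((mem_Ioo.mp hi).2.le.trans hjk)
        fun hP => hiP (mem_inter.mpr ⟨hP, hi⟩), mul_zero]
  calc cf j ≤ c.r z ℓ + ∑ i ∈ Ioo ℓ j, c.r z i * cf i :=
        hoffsum ▸ hrec j hjP hℓj.ne' z hz
    _ ≤ h ℓ z := hz ▸ hh.r_add_sum_r_mul_le (hz ▸ hℓj) cf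
        (fun y hℓy hyz => IH _ (hz ▸ hyz) hℓy (by omega) y rfl)
        (fun y hy => hzmin y (by simp [LevelChain.level, hy, hz]))
    _ ≤ h ℓ x := hzmin x (by simp [LevelChain.level, hx])

/-- Lower-bound drift condition along a path `P[ℓ,k]`
(a set of level indices containing `k` and `ℓ`, all lying in `[ℓ,k]`): if
`c_{ℓ,ℓ} = 1`, `c_{j,ℓ} = 0` for every `j ∈ (ℓ,k]` off the path, and for every
`j ∈ P(ℓ,k]`,
`c_{j,ℓ} ≤ min_{x∈S_j}( r(x,S_ℓ) + Σ_{i∈P(ℓ,j)} r(x,S_i)·c_{i,ℓ} )`,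
then `c_{j,ℓ} ≤ h_min(X_j,S_ℓ)` for every `ℓ < j ≤ k`. -/
theorem path_lower_coefficients_le_hitProb
    (c : LevelChain S) (hreach : c.Reachable)
    (h : ℕ → S → ℝ) (hh : c.IsHitProb h)
    (ℓ k : ℕ) (hℓ : 1 ≤ ℓ) (hℓk : ℓ < k) (hk : k ≤ c.K)
    (P : Finset ℕ) (hPsub : P ⊆ Finset.Icc ℓ k) (hℓP : ℓ ∈ P) (hkP : k ∈ P)
    (cf : ℕ → ℝ)
    (hcf01 : ∀ j, ℓ ≤ j → j ≤ k → 0 ≤ cf j ∧ cf j ≤ 1)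
    (hcfdiag : cf ℓ = 1)
    (hoff : ∀ j, ℓ < j → j ≤ k → j ∉ P → cf j = 0)
    (hrec : ∀ j ∈ P, j ≠ ℓ → ∀ x, c.lev x = j →
      cf j ≤ c.r x ℓ + ∑ i ∈ P ∩ Finset.Ioo ℓ j, c.r x i * cf i) :
    ∀ j, ℓ < j → j ≤ k → ∀ x, c.lev x = j → cf j ≤ h ℓ x :=
  path_lower_coefficients_le_hitProb_general c h hh ℓ k P cf hoff hrec
end

section
/- Let 1 ≤ ℓ < k ≤ K and let P[ℓ,k] be a path from level k to level ℓ. For each j ∈ P(ℓ,k] define c_{j,ℓ} = Σ_{i∈P(ℓ,j]} r_max(X_i, S_{A_i}), where A_i = { i' : ℓ ≤ i' < i and i' ∉ P(ℓ,i) }, r(x, S_{A_i}) = Σ_{i'∈A_i} r(x,S_{i'}), and r_max(X_i, S_{A_i}) = max_{x∈S_i} r(x, S_{A_i}); set c_{j,ℓ} = 1 for j ∈ (ℓ,k] not belonging to P(ℓ,k]. Then c_{j,ℓ} ≥ h_max(X_j,S_ℓ) for every ℓ < j ≤ k. -/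
open Finset

variable {S : Type*} [Fintype S]

/-! Along the path, the coefficient of level `j` is the coefficient of the previous path level
plus `r_max(X_j, S_{A_j})`. From a state `z` maximising `h(·, S_ℓ)` on `S_j`, the first-step
equation with the self-loops of `S_j` factored out gives
`h(z) ≤ Σ_{i ∈ [ℓ, j)} r(z, S_i) · b_i` for any bounds `b_i` of `h` on the lower levels.
Take `b_i = 1` off the path and, by induction, `b_i` = the coefficient of the previous path level
on it; since `Σ_i r(z, S_i) ≤ 1`, the bound is at most `r(z, S_{A_j})` plus that coefficient. -/

namespace LevelChain

/-- `r_max(X_i, S_T) = max_{x ∈ S_i} Σ_{i' ∈ T} r(x, S_{i'})`. -/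
noncomputable def rmaxSum (c : LevelChain S) (i : ℕ) (T : Finset ℕ) : ℝ :=
  sSup ((fun x => ∑ i' ∈ T, c.r x i') '' {x | c.lev x = i})

/-- The explicit upper coefficient `c_{j,ℓ}` of the path `P` at a path level `j`. -/
noncomputable def pathCoeff (c : LevelChain S) (ℓ : ℕ) (P : Finset ℕ) (j : ℕ) : ℝ :=
  ∑ i ∈ P ∩ Ioc ℓ j, c.rmaxSum i (Ico ℓ i \ (P ∩ Ioo ℓ i))

variable (c : LevelChain S)

theorem pSet_nonneg (x : S) (A : Finset S) : 0 ≤ c.pSet x A :=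
  sum_nonneg fun y _ => c.p_nonneg x y

theorem sum_levels_eq_sum_Icc (a b : ℕ) (f : S → ℝ) :
    ∑ y ∈ c.levels a b, f y = ∑ i ∈ Icc a b, ∑ y ∈ c.level i, f y := by
  rw [← sum_fiberwise_of_maps_to (g := c.lev) (t := Icc a b) fun y hy => by simpa [levels] using hy]
  refine sum_congr rfl fun i hi => sum_congr ?_ fun _ _ => rfl
  ext y
  simp only [levels, level, mem_filter, mem_univ, true_and]
  constructor
  · exact And.right
  · rintro rfl
    exact ⟨mem_Icc.mp hi, rfl⟩

theorem sum_levels_eq_sum_Ico_add (f : S → ℝ) {a b : ℕ} (hab : a ≤ b) :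
    ∑ y ∈ c.levels a b, f y = ∑ i ∈ Ico a b, ∑ y ∈ c.level i, f y + ∑ y ∈ c.level b, f y := by
  rw [sum_levels_eq_sum_Icc, ← Ico_insert_right hab, sum_insert right_notMem_Ico, add_comm]

theorem pSet_levels_zero_lev (x : S) : c.pSet x (c.levels 0 (c.lev x)) = 1 := by
  rw [← c.p_row_sum x, pSet]
  refine sum_subset (subset_univ _) fun y _ hy => c.elitist x y ?_
  simpa [levels] using hy

theorem sum_Ico_pSet_level (x : S) :
    ∑ i ∈ Ico 0 (c.lev x), c.pSet x (c.level i) = 1 - c.pSet x (c.level (c.lev x)) := by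
  rw [← c.pSet_levels_zero_lev x, pSet, c.sum_levels_eq_sum_Ico_add _ (Nat.zero_le _)]
  simp only [pSet, add_sub_cancel_right]

theorem one_sub_pSet_level_nonneg (x : S) : 0 ≤ 1 - c.pSet x (c.level (c.lev x)) := by
  rw [← sum_Ico_pSet_level]
  exact sum_nonneg fun i _ => c.pSet_nonneg x _

theorem one_sub_pSet_level_pos (hreach : c.Reachable) (x : S) (hx : 1 ≤ c.lev x) :
    0 < 1 - c.pSet x (c.level (c.lev x)) := by
  have hIcc : Icc 0 (c.lev x - 1) = Ico 0 (c.lev x) := by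
    ext i
    simp only [mem_Icc, mem_Ico]
    omega
  calc 0 < c.pSet x (c.levels 0 (c.lev x - 1)) := hreach (c.lev x) hx (c.lev_le x) x rfl
    _ = ∑ i ∈ Ico 0 (c.lev x), c.pSet x (c.level i) := by
      rw [pSet, sum_levels_eq_sum_Icc, hIcc]
      rfl
    _ = _ := c.sum_Ico_pSet_level x

theorem r_nonneg (x : S) (i : ℕ) : 0 ≤ c.r x i := by
  unfold r
  split_ifs
  · exact le_rfl
  · exact div_nonneg (c.pSet_nonneg x _) (c.one_sub_pSet_level_nonneg x)

theorem sum_r_le_one (x : S) {T : Finset ℕ} (hT : T ⊆ Iio (c.lev x)) :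
    ∑ i ∈ T, c.r x i ≤ 1 := by
  have hT' : T ⊆ Ico 0 (c.lev x) := fun i hi => by simpa using hT hi
  rw [sum_congr rfl fun i hi => c.r_of_ne (mem_Iio.mp (hT hi)).ne, ← sum_div]
  refine div_le_one_of_le₀ ?_ (c.one_sub_pSet_level_nonneg x)
  rw [← sum_Ico_pSet_level]
  exact sum_le_sum_of_subset_of_nonneg hT' fun i _ _ => c.pSet_nonneg x _

theorem le_rmaxSum {x : S} (T : Finset ℕ) : ∑ i' ∈ T, c.r x i' ≤ c.rmaxSum (c.lev x) T :=
  le_csSup (Set.toFinite _).bddAbove ⟨x, rfl, rfl⟩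

theorem rmaxSum_nonneg (i : ℕ) (T : Finset ℕ) : 0 ≤ c.rmaxSum i T :=
  Real.sSup_nonneg <| by
    rintro _ ⟨x, -, rfl⟩
    exact sum_nonneg fun i' _ => c.r_nonneg x i'

theorem pathCoeff_nonneg (ℓ : ℕ) (P : Finset ℕ) (j : ℕ) : 0 ≤ c.pathCoeff ℓ P j :=
  sum_nonneg fun _ _ => c.rmaxSum_nonneg _ _

theorem pathCoeff_mono (ℓ : ℕ) (P : Finset ℕ) : Monotone (c.pathCoeff ℓ P) := fun _ _ hij =>
  sum_le_sum_of_subset_of_nonneg (inter_subset_inter_left (Ioc_subset_Ioc_right hij))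
    fun _ _ _ => c.rmaxSum_nonneg _ _

theorem pathCoeff_eq_rmaxSum_add {ℓ j : ℕ} {P : Finset ℕ} (hjP : j ∈ P) (hℓj : ℓ < j) :
    c.pathCoeff ℓ P j = c.rmaxSum j (Ico ℓ j \ (P ∩ Ioo ℓ j)) + c.pathCoeff ℓ P (j - 1) := by
  have hsplit : P ∩ Ioc ℓ j = insert j (P ∩ Ioc ℓ (j - 1)) := by
    ext i
    simp only [mem_inter, mem_Ioc, mem_insert]
    constructor
    · rintro ⟨hiP, hℓi, hij⟩
      rcases hij.eq_or_lt with rfl | hij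
      · exact Or.inl rfl
      · exact Or.inr ⟨hiP, hℓi, by omega⟩
    · rintro (rfl | ⟨hiP, hℓi, hij⟩)
      · exact ⟨hjP, hℓj, le_rfl⟩
      · exact ⟨hiP, hℓi, by omega⟩
  rw [pathCoeff, hsplit, sum_insert (by simp only [mem_inter, mem_Ioc]; omega)]
  rfl

/-- At a maximiser `z` of `h(·, S_ℓ)` on its level, the self-loops in `S_{lev z}` can only lower
the first-step average, so they may be divided out. -/
theorem hitProb_le_sum_r_mul (hreach : c.Reachable) {h : ℕ → S → ℝ} (hh : c.IsHitProb h)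
    {ℓ : ℕ} {z : S} (hℓz : ℓ < c.lev z) (hmax : ∀ y, c.lev y = c.lev z → h ℓ y ≤ h ℓ z)
    (b : ℕ → ℝ) (hb : ∀ y, ℓ ≤ c.lev y → c.lev y < c.lev z → h ℓ y ≤ b (c.lev y)) :
    h ℓ z ≤ ∑ i ∈ Ico ℓ (c.lev z), c.r z i * b i := by
  set D := 1 - c.pSet z (c.level (c.lev z))
  have hD : 0 < D := c.one_sub_pSet_level_pos hreach z (by omega)
  have hlevel_le (i : ℕ) (B : ℝ) (hB : ∀ y, c.lev y = i → h ℓ y ≤ B) :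
      ∑ y ∈ c.level i, c.p z y * h ℓ y ≤ c.pSet z (c.level i) * B := by
    rw [pSet, sum_mul]
    exact sum_le_sum fun y hy =>
      mul_le_mul_of_nonneg_left (hB y (by simpa [level] using hy)) (c.p_nonneg z y)
  have hstep : h ℓ z ≤ ∑ i ∈ Ico ℓ (c.lev z), c.pSet z (c.level i) * b i
      + c.pSet z (c.level (c.lev z)) * h ℓ z := by
    conv_lhs => rw [hh.2.2.2 ℓ z hℓz, c.sum_levels_eq_sum_Ico_add _ hℓz.le]
    gcongr with i hi
    · exact hlevel_le i (b i) fun y hy => hy ▸ hb y (by simp_all) (by simp_all)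
    · exact hlevel_le _ _ hmax
  have hr (i : ℕ) (hi : i ∈ Ico ℓ (c.lev z)) : c.r z i * D = c.pSet z (c.level i) := by
    rw [c.r_of_ne (mem_Ico.mp hi).2.ne, div_mul_cancel₀ _ hD.ne']
  refine le_of_mul_le_mul_right ?_ hD
  rw [sum_mul, sum_congr rfl fun i hi => by rw [mul_right_comm, hr i hi]]
  linarith

theorem hitProb_le_rmaxSum_add (hreach : c.Reachable) {h : ℕ → S → ℝ} (hh : c.IsHitProb h)
    {ℓ j : ℕ} (hℓj : ℓ < j) {Q : Finset ℕ} (hQ : Q ⊆ Ico ℓ j) {C : ℝ} (hC : 0 ≤ C)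
    (hQC : ∀ y, c.lev y ∈ Q → h ℓ y ≤ C) (x : S) (hx : c.lev x = j) :
    h ℓ x ≤ c.rmaxSum j (Ico ℓ j \ Q) + C := by
  obtain ⟨z, hz, hmax⟩ := exists_max_image (c.level j) (h ℓ) ⟨x, by simp [level, hx]⟩
  simp only [level, mem_filter, mem_univ, true_and] at hz hmax
  subst hz
  have hbound := c.hitProb_le_sum_r_mul hreach hh hℓj hmax
    (fun i => if i ∈ Q then C else 1) fun y _ _ => by
      split_ifs with hyQ
      · exact hQC y hyQ
      · exact (hh.1 ℓ y).2
  rw [← sum_sdiff hQ] at hbound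
  have hoff : ∑ i ∈ Ico ℓ (c.lev z) \ Q, c.r z i * (if i ∈ Q then C else 1)
      ≤ c.rmaxSum (c.lev z) (Ico ℓ (c.lev z) \ Q) := by
    rw [sum_congr rfl fun i hi => by rw [if_neg (mem_sdiff.mp hi).2, mul_one]]
    exact c.le_rmaxSum _
  have hon : ∑ i ∈ Q, c.r z i * (if i ∈ Q then C else 1) ≤ C := by
    rw [sum_congr rfl fun i hi => by rw [if_pos hi], ← sum_mul]
    exact mul_le_of_le_one_left hC
      (c.sum_r_le_one z (hQ.trans fun i hi => mem_Iio.mpr (mem_Ico.mp hi).2))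
  linarith [hmax x hx]

end LevelChain

theorem path_explicit_upper_coefficients_ge_hitProb_general
    (c : LevelChain S) (hreach : c.Reachable)
    (h : ℕ → S → ℝ) (hh : c.IsHitProb h)
    (ℓ k : ℕ)
    (P : Finset ℕ)
    (cf : ℕ → ℝ)
    (hcfP : ∀ j ∈ P, j ≠ ℓ →
      cf j = ∑ i ∈ P ∩ Finset.Ioc ℓ j,
        sSup ((fun x => ∑ i' ∈ Finset.Ico ℓ i \ (P ∩ Finset.Ioo ℓ i), c.r x i') ''
          {x | c.lev x = i}))
    (hoff : ∀ j, ℓ < j → j ≤ k → j ∉ P → cf j = 1) :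
    ∀ j, ℓ < j → j ≤ k → ∀ x, c.lev x = j → cf j ≥ h ℓ x := by
  have hcf : ∀ j ∈ P, j ≠ ℓ → cf j = c.pathCoeff ℓ P j := hcfP
  intro j
  induction j using Nat.strong_induction_on with
  | _ j ih =>
  intro hℓj hjk x hx
  by_cases hjP : j ∈ P
  · rw [ge_iff_le, hcf j hjP hℓj.ne', c.pathCoeff_eq_rmaxSum_add hjP hℓj]
    refine c.hitProb_le_rmaxSum_add hreach hh hℓj (inter_subset_right.trans Ioo_subset_Ico_self)
      (c.pathCoeff_nonneg ℓ P _) (fun y hy => ?_) x hx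
    obtain ⟨hyP, hℓy, hyj⟩ : c.lev y ∈ P ∧ ℓ < c.lev y ∧ c.lev y < j := by simpa using hy
    calc h ℓ y ≤ cf (c.lev y) := ih _ hyj hℓy (by omega) y rfl
      _ = c.pathCoeff ℓ P (c.lev y) := hcf _ hyP hℓy.ne'
      _ ≤ c.pathCoeff ℓ P (j - 1) := c.pathCoeff_mono ℓ P (by omega)
  · rw [hoff j hℓj hjk hjP]
    exact (hh.1 ℓ x).2

/-- Explicit upper-bound coefficients along a path `P[ℓ,k]`:
for `j ∈ P(ℓ,k]` let `c_{j,ℓ} = Σ_{i∈P(ℓ,j]} r_max(X_i, S_{A_i})`, where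
`A_i = {i' : ℓ ≤ i' < i, i' ∉ P(ℓ,i)}` and `r(x, S_{A_i}) = Σ_{i'∈A_i} r(x,S_{i'})`,
and set `c_{j,ℓ} = 1` for `j ∈ (ℓ,k]` off the path. Then
`c_{j,ℓ} ≥ h_max(X_j,S_ℓ)` for every `ℓ < j ≤ k`. -/
theorem path_explicit_upper_coefficients_ge_hitProb
    (c : LevelChain S) (hreach : c.Reachable)
    (h : ℕ → S → ℝ) (hh : c.IsHitProb h)
    (ℓ k : ℕ) (hℓ : 1 ≤ ℓ) (hℓk : ℓ < k) (hk : k ≤ c.K)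
    (P : Finset ℕ) (hPsub : P ⊆ Finset.Icc ℓ k) (hℓP : ℓ ∈ P) (hkP : k ∈ P)
    (cf : ℕ → ℝ)
    (hcfP : ∀ j ∈ P, j ≠ ℓ →
      cf j = ∑ i ∈ P ∩ Finset.Ioc ℓ j,
        sSup ((fun x => ∑ i' ∈ Finset.Ico ℓ i \ (P ∩ Finset.Ioo ℓ i), c.r x i') ''
          {x | c.lev x = i}))
    (hoff : ∀ j, ℓ < j → j ≤ k → j ∉ P → cf j = 1) :
    ∀ j, ℓ < j → j ≤ k → ∀ x, c.lev x = j → cf j ≥ h ℓ x :=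
  path_explicit_upper_coefficients_ge_hitProb_general c hreach h hh ℓ k P cf hcfP hoff
end
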